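/- Let X ⊆ ℝ^d be a nonempty locally finite set, let K ⊆ ℝ^d be a set, and let R′ > 0 be such that for every z ∈ K the Voronoi cell of z with respect to X ∪ {z} is contained in the closed ball of radius R′ centered at the origin. Then for every locally finite set D ⊆ ℝ^d one has v_{X∪D}(K) ⊆ v_{X∪(D∩K)}(K) ⊆ B(0, R′), where B(0,R′) is the closed ball of radius R′ centered at the origin; in particular the Lebesgue measures satisfy |V(v_{X∪D}(K)) − V(v_X(K))| ≤ V(B(0,R′)). -/

import Mathlib

open Metric MeasureTheory

/-- The Voronoi cell of `x` with respect to the point set `X`. -/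
def voronoiCell {d : ℕ} (X : Set (EuclideanSpace ℝ (Fin d)))
    (x : EuclideanSpace ℝ (Fin d)) : Set (EuclideanSpace ℝ (Fin d)) :=
  {z | ∀ y ∈ X, dist z x ≤ dist z y}

/-- The Voronoi approximation of `A` with respect to `X`: the union of all
Voronoi cells with nucleus in `A`. -/
def voronoiApprox {d : ℕ} (X A : Set (EuclideanSpace ℝ (Fin d))) :
    Set (EuclideanSpace ℝ (Fin d)) :=
  ⋃ x ∈ X ∩ A, voronoiCell X x

/-! Adding points only shrinks Voronoi cells. Hence a cell with nucleus `z ∈ K` taken with respect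
to any superset of `X` lies in the cell of `z` with respect to `X ∪ {z}`, which is inside the ball;
so both Voronoi approximations lie in the ball, whose volume bounds the difference of theirs. -/

section Voronoi

variable {d : ℕ}

theorem voronoiCell_anti {X Y : Set (EuclideanSpace ℝ (Fin d))} (hXY : X ⊆ Y)
    (x : EuclideanSpace ℝ (Fin d)) : voronoiCell Y x ⊆ voronoiCell X x :=
  fun _ hz y hy => hz y (hXY hy)

@[simp]
theorem voronoiCell_union_singleton_self (X : Set (EuclideanSpace ℝ (Fin d)))
    (x : EuclideanSpace ℝ (Fin d)) : voronoiCell (X ∪ {x}) x = voronoiCell X x := by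
  ext z
  simp [voronoiCell]

theorem voronoiCell_subset_voronoiCell_union_singleton {X Y : Set (EuclideanSpace ℝ (Fin d))}
    (hXY : X ⊆ Y) (x : EuclideanSpace ℝ (Fin d)) :
    voronoiCell Y x ⊆ voronoiCell (X ∪ {x}) x := by
  rw [voronoiCell_union_singleton_self]
  exact voronoiCell_anti hXY x

theorem voronoiApprox_subset_of_forall_voronoiCell_union_singleton_subset
    {X Y K B : Set (EuclideanSpace ℝ (Fin d))} (hXY : X ⊆ Y)
    (hK : ∀ z ∈ K, voronoiCell (X ∪ {z}) z ⊆ B) : voronoiApprox Y K ⊆ B :=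
  Set.iUnion₂_subset fun x hx =>
    (voronoiCell_subset_voronoiCell_union_singleton hXY x).trans (hK x hx.2)

theorem voronoiApprox_union_subset_union_inter (X D A : Set (EuclideanSpace ℝ (Fin d))) :
    voronoiApprox (X ∪ D) A ⊆ voronoiApprox (X ∪ (D ∩ A)) A := by
  refine Set.iUnion₂_mono' fun x hx => ⟨x, ?_, ?_⟩
  · obtain ⟨hxXD, hxA⟩ := hx
    exact ⟨hxXD.imp_right fun hxD => ⟨hxD, hxA⟩, hxA⟩
  · exact voronoiCell_anti (Set.union_subset_union_right X Set.inter_subset_left) x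

end Voronoi

theorem abs_toReal_measure_sub_le_of_subset {α : Type*} [MeasurableSpace α] {μ : Measure α}
    {s t B : Set α} (hs : s ⊆ B) (ht : t ⊆ B) (hB : μ B ≠ ⊤) :
    |(μ s).toReal - (μ t).toReal| ≤ (μ B).toReal := by
  have hsB := ENNReal.toReal_mono hB (measure_mono (μ := μ) hs)
  have htB := ENNReal.toReal_mono hB (measure_mono (μ := μ) ht)
  rw [abs_sub_le_iff]
  constructor <;> linarith [ENNReal.toReal_nonneg (a := μ s), ENNReal.toReal_nonneg (a := μ t)]

theorem voronoiApprox_union_subset_ball_and_volume_bound_general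
    {d : ℕ} (X K : Set (EuclideanSpace ℝ (Fin d)))
    (R' : ℝ)
    (hRinf : ∀ z ∈ K, voronoiCell (X ∪ {z}) z ⊆ closedBall (0 : EuclideanSpace ℝ (Fin d)) R')
    (D : Set (EuclideanSpace ℝ (Fin d))) :
    voronoiApprox (X ∪ D) K ⊆ voronoiApprox (X ∪ (D ∩ K)) K ∧
    voronoiApprox (X ∪ (D ∩ K)) K ⊆ closedBall (0 : EuclideanSpace ℝ (Fin d)) R' ∧
    |(volume (voronoiApprox (X ∪ D) K)).toReal - (volume (voronoiApprox X K)).toReal|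
      ≤ (volume (closedBall (0 : EuclideanSpace ℝ (Fin d)) R')).toReal := by
  have hsub := voronoiApprox_union_subset_union_inter X D K
  have hball : ∀ Y, X ⊆ Y → voronoiApprox Y K ⊆ closedBall 0 R' := fun _ hXY =>
    voronoiApprox_subset_of_forall_voronoiCell_union_singleton_subset hXY hRinf
  have hDK := hball (X ∪ (D ∩ K)) Set.subset_union_left
  exact ⟨hsub, hDK, abs_toReal_measure_sub_le_of_subset (hsub.trans hDK) (hball X subset_rfl)
    measure_closedBall_lt_top.ne⟩

theorem voronoiApprox_union_subset_ball_and_volume_bound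
    {d : ℕ} (X K : Set (EuclideanSpace ℝ (Fin d)))
    (hXne : X.Nonempty)
    (hXlf : ∀ C : Set (EuclideanSpace ℝ (Fin d)), IsCompact C → (X ∩ C).Finite)
    (R' : ℝ) (hR' : 0 < R')
    (hRinf : ∀ z ∈ K, voronoiCell (X ∪ {z}) z ⊆ closedBall (0 : EuclideanSpace ℝ (Fin d)) R')
    (D : Set (EuclideanSpace ℝ (Fin d)))
    (hDlf : ∀ C : Set (EuclideanSpace ℝ (Fin d)), IsCompact C → (D ∩ C).Finite) :
    voronoiApprox (X ∪ D) K ⊆ voronoiApprox (X ∪ (D ∩ K)) K ∧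
    voronoiApprox (X ∪ (D ∩ K)) K ⊆ closedBall (0 : EuclideanSpace ℝ (Fin d)) R' ∧
    |(volume (voronoiApprox (X ∪ D) K)).toReal - (volume (voronoiApprox X K)).toReal|
      ≤ (volume (closedBall (0 : EuclideanSpace ℝ (Fin d)) R')).toReal :=
  voronoiApprox_union_subset_ball_and_volume_bound_general X K R' hRinf D
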